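/- arXiv:2410.05465 — 3 statements merged into one kernel-verified Lean document; each statement's English description precedes it below -/
import Mathlib

section
/- If f_1,...,f_k are nonzero polynomials with nonnegative coefficients and their product f_1·…·f_k is homogeneous, then each f_i is homogeneous. -/
/-!
With nonnegative coefficients nothing cancels in a product, so if `p` has a monomial `m` and
`q` a monomial `s`, then `p * q` has the monomial `m + s`. Fixing `s`, homogeneity of degree `d`
of `p * q` forces every monomial of `p` to have degree `d - |s|`. Apply this to
`f i * ∏ j ≠ i, f j`.
-/

open MvPolynomial

namespace MvPolynomial

variable {σ R : Type*} [CommSemiring R] [PartialOrder R] [IsOrderedRing R]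

theorem coeff_mul_nonneg {p q : MvPolynomial σ R} (hp : ∀ m, 0 ≤ coeff m p)
    (hq : ∀ m, 0 ≤ coeff m q) (m : σ →₀ ℕ) : 0 ≤ coeff m (p * q) := by
  classical
  rw [coeff_mul]
  exact Finset.sum_nonneg fun x _ => mul_nonneg (hp _) (hq _)

theorem coeff_prod_nonneg {ι : Type*} (s : Finset ι) {f : ι → MvPolynomial σ R}
    (hf : ∀ i ∈ s, ∀ m, 0 ≤ coeff m (f i)) (m : σ →₀ ℕ) : 0 ≤ coeff m (∏ i ∈ s, f i) := by
  refine Finset.prod_induction f (fun p => ∀ m, 0 ≤ coeff m p) (fun _ _ => coeff_mul_nonneg)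
    (fun m => ?_) hf m
  classical
  rw [coeff_one]
  split_ifs <;> simp

variable [NoZeroDivisors R]

theorem coeff_add_mul_ne_zero_of_nonneg {p q : MvPolynomial σ R} (hp : ∀ m, 0 ≤ coeff m p)
    (hq : ∀ m, 0 ≤ coeff m q) {m s : σ →₀ ℕ} (hm : coeff m p ≠ 0) (hs : coeff s q ≠ 0) :
    coeff (m + s) (p * q) ≠ 0 := by
  have hterm : 0 < coeff m p * coeff s q :=
    (mul_nonneg (hp m) (hq s)).lt_of_ne (mul_ne_zero hm hs).symm
  have hle : coeff m p * coeff s q ≤ coeff (m + s) (p * q) := by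
    classical
    rw [coeff_mul]
    exact Finset.single_le_sum (f := fun x => coeff x.1 p * coeff x.2 q)
      (fun x _ => mul_nonneg (hp _) (hq _)) (a := (m, s))
      (Finset.HasAntidiagonal.mem_antidiagonal.2 rfl)
  exact (hterm.trans_le hle).ne'

theorem IsHomogeneous.exists_of_mul_of_nonneg {p q : MvPolynomial σ R}
    (hp : ∀ m, 0 ≤ coeff m p) (hq : ∀ m, 0 ≤ coeff m q) (hq0 : q ≠ 0) {d : ℕ}
    (h : (p * q).IsHomogeneous d) : ∃ e, p.IsHomogeneous e := by
  obtain ⟨s, hs⟩ := support_nonempty.2 hq0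
  rw [mem_support_iff] at hs
  refine ⟨d - Finsupp.weight 1 s, fun m hm => ?_⟩
  have hdeg := h (coeff_add_mul_ne_zero_of_nonneg hp hq hm hs)
  rw [map_add] at hdeg
  change Finsupp.weight 1 m = _
  omega

end MvPolynomial

/-- If `f 1, …, f k` are nonzero real polynomials with nonnegative coefficients and their
product is homogeneous, then each `f i` is homogeneous. -/
theorem stmt5 {n k : ℕ} (f : Fin k → MvPolynomial (Fin n) ℝ)
    (hne : ∀ i, f i ≠ 0)
    (hpos : ∀ i (m : Fin n →₀ ℕ), 0 ≤ coeff m (f i))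
    (d : ℕ) (hhom : (∏ i, f i).IsHomogeneous d) :
    ∀ i, ∃ d' : ℕ, (f i).IsHomogeneous d' := by
  intro i
  rw [← Finset.mul_prod_erase Finset.univ f (Finset.mem_univ i)] at hhom
  have hrest : ∏ j ∈ Finset.univ.erase i, f j ≠ 0 :=
    Finset.prod_ne_zero_iff.2 fun j _ => hne j
  exact hhom.exists_of_mul_of_nonneg (hpos i) (coeff_prod_nonneg _ fun j _ => hpos j) hrest
end

section
/- For the recursively defined polynomial family H_{u,v} (with H_{u,v} = x_{u,v} when |u|=|v|=k and H_{u,v} = Σ_{a=1}^{2} H_{u1,va}·H_{u2,va} otherwise), the polynomial H_{∅,∅} has exactly 2^{2^k - 1} monomials, each with coefficient 1. -/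
/-!
By induction on the depth, `H_{u,v}` only involves variables `x_{σ,τ}` with `u` a prefix of `σ`
and `v` a prefix of `τ`. So the two factors `H_{u1,va}` and `H_{u2,va}` have disjoint sets of
variables: a monomial of their product determines its two factors, hence the monomial counts
multiply and all coefficients stay `1`. The two summands (`a = 1, 2`) only involve variables with
second index extending `va`, and neither has a constant term, so they share no monomial and the
counts add. Thus `N(r + 1) = 2 N(r) ^ 2` with `N(0) = 1`, i.e. `N(r) = 2 ^ (2 ^ r - 1)`.
-/

open MvPolynomial
open scoped Pointwise

/-- The recursively defined polynomial family `H_{u,v}`, parametrized by the remaining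
depth `r`: if `r = 0` (i.e. `|u| = |v| = k`) then `H_{u,v} = x_{u,v}`, and otherwise
`H_{u,v} = ∑_{a ∈ {1,2}} H_{u1,va} · H_{u2,va}`. -/
noncomputable def Hpoly : ℕ → List (Fin 2) → List (Fin 2) →
    MvPolynomial (List (Fin 2) × List (Fin 2)) ℝ
  | 0, u, v => X (u, v)
  | r + 1, u, v =>
      ∑ a : Fin 2, Hpoly r (u ++ [0]) (v ++ [a]) * Hpoly r (u ++ [1]) (v ++ [a])

theorem List.eq_of_append_singleton_prefix {α : Type*} {w l : List α} {x y : α}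
    (hx : w ++ [x] <+: l) (hy : w ++ [y] <+: l) : x = y := by
  simpa using (prefix_of_prefix_length_le hx hy (by simp)).eq_of_length (by simp)

namespace MvPolynomial

variable {R σ : Type*} [CommSemiring R] {f g : MvPolynomial σ R}

theorem uniqueAdd_support_of_disjoint_vars (h : Disjoint f.vars g.vars) {a b : σ →₀ ℕ}
    (ha : a ∈ f.support) (hb : b ∈ g.support) : UniqueAdd f.support g.support a b := by
  classical
  -- the `f`-part of a monomial of `f * g` is recovered by restricting to the variables of `f`
  have restrict : ∀ {a' b'}, a' ∈ f.support → b' ∈ g.support →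
      (a' + b').filter (· ∈ f.vars) = a' := fun {a' b'} ha' hb' => by
    have hfa' : a'.filter (· ∈ f.vars) = a' := (Finsupp.filter_eq_self_iff _ _).mpr fun i ha'i =>
      (mem_vars_iff_mem_support i).mpr ⟨a', ha', Finsupp.mem_support_iff.mpr ha'i⟩
    have hfb' : b'.filter (· ∈ f.vars) = 0 := (Finsupp.filter_eq_zero_iff _ _).mpr fun i hi =>
      by_contra fun hb'i => Finset.disjoint_left.mp h hi
        ((mem_vars_iff_mem_support i).mpr ⟨b', hb', Finsupp.mem_support_iff.mpr hb'i⟩)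
    rw [Finsupp.filter_add, hfa', hfb', add_zero]
  intro a' b' ha' hb' hab
  have ha'a : a' = a := by rw [← restrict ha' hb', hab, restrict ha hb]
  exact ⟨ha'a, add_left_cancel (ha'a ▸ hab)⟩

theorem coeff_add_mul_of_disjoint_vars (h : Disjoint f.vars g.vars) {a b : σ →₀ ℕ}
    (ha : a ∈ f.support) (hb : b ∈ g.support) :
    coeff (a + b) (f * g) = coeff a f * coeff b g :=
  AddMonoidAlgebra.coeff_mul_add_of_uniqueAdd (uniqueAdd_support_of_disjoint_vars h ha hb)

theorem support_mul_of_disjoint_vars [DecidableEq σ] [NoZeroDivisors R]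
    (h : Disjoint f.vars g.vars) : (f * g).support = f.support + g.support := by
  refine (support_mul f g).antisymm fun m hm => ?_
  obtain ⟨a, ha, b, hb, rfl⟩ := Finset.mem_add.mp hm
  rw [mem_support_iff, coeff_add_mul_of_disjoint_vars h ha hb]
  exact mul_ne_zero (mem_support_iff.mp ha) (mem_support_iff.mp hb)

theorem card_support_mul_of_disjoint_vars [NoZeroDivisors R] (h : Disjoint f.vars g.vars) :
    (f * g).support.card = f.support.card * g.support.card := by
  classical
  rw [support_mul_of_disjoint_vars h, Finset.card_add_iff]
  rintro ⟨a, b⟩ ⟨ha, hb⟩ ⟨a', b'⟩ ⟨ha', hb'⟩ hab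
  obtain ⟨rfl, rfl⟩ := uniqueAdd_support_of_disjoint_vars h ha' hb' ha hb hab
  rfl

theorem coeff_mul_eq_one_of_disjoint_vars (h : Disjoint f.vars g.vars)
    (hf : ∀ m ∈ f.support, coeff m f = 1) (hg : ∀ m ∈ g.support, coeff m g = 1) :
    ∀ m ∈ (f * g).support, coeff m (f * g) = 1 := by
  classical
  intro m hm
  obtain ⟨a, ha, b, hb, rfl⟩ := Finset.mem_add.mp (support_mul f g hm)
  rw [coeff_add_mul_of_disjoint_vars h ha hb, hf a ha, hg b hb, one_mul]

theorem disjoint_support_of_disjoint_vars (h : Disjoint f.vars g.vars)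
    (hf : constantCoeff f = 0) : Disjoint f.support g.support := by
  refine Finset.disjoint_left.mpr fun m hmf hmg => ?_
  obtain ⟨i, hi⟩ : m.support.Nonempty := by
    rw [Finsupp.support_nonempty_iff]
    rintro rfl
    exact mem_support_iff.mp hmf (by rwa [← constantCoeff_eq])
  exact Finset.disjoint_left.mp h ((mem_vars_iff_mem_support i).mpr ⟨m, hmf, hi⟩)
    ((mem_vars_iff_mem_support i).mpr ⟨m, hmg, hi⟩)

theorem card_support_add_of_disjoint (h : Disjoint f.support g.support) :
    (f + g).support.card = f.support.card + g.support.card := by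
  classical
  rw [← Finset.card_union_of_disjoint h]
  exact congrArg Finset.card (Finsupp.support_add_eq h)

theorem coeff_add_eq_one_of_disjoint (h : Disjoint f.support g.support)
    (hf : ∀ m ∈ f.support, coeff m f = 1) (hg : ∀ m ∈ g.support, coeff m g = 1) :
    ∀ m ∈ (f + g).support, coeff m (f + g) = 1 := by
  classical
  intro m hm
  rw [coeff_add]
  rcases Finset.mem_union.mp (support_add hm) with hmf | hmg
  · rw [hf m hmf, notMem_support_iff.mp (Finset.disjoint_left.mp h hmf), add_zero]
  · rw [hg m hmg, notMem_support_iff.mp (Finset.disjoint_right.mp h hmg), zero_add]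

end MvPolynomial

theorem Hpoly_succ (r : ℕ) (u v : List (Fin 2)) :
    Hpoly (r + 1) u v =
      Hpoly r (u ++ [0]) (v ++ [0]) * Hpoly r (u ++ [1]) (v ++ [0]) +
        Hpoly r (u ++ [0]) (v ++ [1]) * Hpoly r (u ++ [1]) (v ++ [1]) :=
  Fin.sum_univ_two _

theorem constantCoeff_Hpoly (r : ℕ) (u v : List (Fin 2)) : constantCoeff (Hpoly r u v) = 0 := by
  induction r generalizing u v with
  | zero => exact constantCoeff_X (R := ℝ) _
  | succ r ih => simp [Hpoly, ih]

theorem prefix_of_mem_vars_Hpoly {r : ℕ} {u v : List (Fin 2)} {p : List (Fin 2) × List (Fin 2)}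
    (hp : p ∈ (Hpoly r u v).vars) : u <+: p.1 ∧ v <+: p.2 := by
  classical
  induction r generalizing u v with
  | zero =>
    rw [Hpoly, vars_X, Finset.mem_singleton] at hp
    simp [hp]
  | succ r ih =>
    obtain ⟨a, -, hpa⟩ := Finset.mem_biUnion.mp (vars_sum_subset _ _ hp)
    rcases Finset.mem_union.mp (vars_mul _ _ hpa) with h | h <;>
      exact ⟨(List.prefix_append _ _).trans (ih h).1, (List.prefix_append _ _).trans (ih h).2⟩

theorem disjoint_vars_Hpoly (r : ℕ) (u w : List (Fin 2)) :
    Disjoint (Hpoly r (u ++ [0]) w).vars (Hpoly r (u ++ [1]) w).vars :=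
  Finset.disjoint_left.mpr fun _ h₀ h₁ => absurd
    (List.eq_of_append_singleton_prefix (prefix_of_mem_vars_Hpoly h₀).1
      (prefix_of_mem_vars_Hpoly h₁).1) (by decide)

theorem prefix_of_mem_vars_Hpoly_mul {r : ℕ} {u v : List (Fin 2)} {a : Fin 2}
    {p : List (Fin 2) × List (Fin 2)}
    (hp : p ∈ (Hpoly r (u ++ [0]) (v ++ [a]) * Hpoly r (u ++ [1]) (v ++ [a])).vars) :
    v ++ [a] <+: p.2 := by
  classical
  rcases Finset.mem_union.mp (vars_mul _ _ hp) with h | h <;> exact (prefix_of_mem_vars_Hpoly h).2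

theorem disjoint_support_Hpoly_summands (r : ℕ) (u v : List (Fin 2)) :
    Disjoint (Hpoly r (u ++ [0]) (v ++ [0]) * Hpoly r (u ++ [1]) (v ++ [0])).support
      (Hpoly r (u ++ [0]) (v ++ [1]) * Hpoly r (u ++ [1]) (v ++ [1])).support :=
  disjoint_support_of_disjoint_vars
    (Finset.disjoint_left.mpr fun _ h₀ h₁ => absurd
      (List.eq_of_append_singleton_prefix (prefix_of_mem_vars_Hpoly_mul h₀)
        (prefix_of_mem_vars_Hpoly_mul h₁)) (by decide))
    (by simp [constantCoeff_Hpoly])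

theorem card_support_Hpoly (r : ℕ) (u v : List (Fin 2)) :
    (Hpoly r u v).support.card = 2 ^ (2 ^ r - 1) := by
  induction r generalizing u v with
  | zero => simp [Hpoly, support_X]
  | succ r ih =>
    have hexp : 2 ^ (2 ^ (r + 1) - 1) = 2 * (2 ^ (2 ^ r - 1) * 2 ^ (2 ^ r - 1)) := by
      rw [← pow_add, ← pow_succ']
      have := Nat.one_le_two_pow (n := r)
      rw [pow_succ]
      congr 1
      omega
    rw [Hpoly_succ, card_support_add_of_disjoint (disjoint_support_Hpoly_summands r u v),
      card_support_mul_of_disjoint_vars (disjoint_vars_Hpoly ..),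
      card_support_mul_of_disjoint_vars (disjoint_vars_Hpoly ..), ih, ih, ih, ih, hexp, two_mul]

theorem coeff_Hpoly_of_mem_support (r : ℕ) (u v : List (Fin 2)) :
    ∀ m ∈ (Hpoly r u v).support, coeff m (Hpoly r u v) = 1 := by
  induction r generalizing u v with
  | zero => simp [Hpoly, support_X, coeff_X]
  | succ r ih =>
    rw [Hpoly_succ]
    exact coeff_add_eq_one_of_disjoint (disjoint_support_Hpoly_summands r u v)
      (coeff_mul_eq_one_of_disjoint_vars (disjoint_vars_Hpoly ..) (ih _ _) (ih _ _))
      (coeff_mul_eq_one_of_disjoint_vars (disjoint_vars_Hpoly ..) (ih _ _) (ih _ _))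

/-- `H_{∅,∅}` has exactly `2 ^ (2 ^ k - 1)` monomials, each with coefficient 1. -/
theorem stmt8 (k : ℕ) :
    (Hpoly k [] []).support.card = 2 ^ (2 ^ k - 1) ∧
      ∀ m ∈ (Hpoly k [] []).support, coeff m (Hpoly k [] []) = 1 :=
  ⟨card_support_Hpoly k [] [], coeff_Hpoly_of_mem_support k [] []⟩
end

section
/- Let n = 2^{2k}. Consider the polynomial P_j defined recursively on levels: at level 0 there are 2^{2k-1} polynomials f_i = x_{2i-1}·x_{2i}; at each odd step, consecutive pairs of polynomials are summed; at each even step, consecutive pairs are multiplied; after 2k−1 alternating steps a single polynomial P remains. Then P is a homogeneous multilinear polynomial of total degree 2^k in the n variables x_1,...,x_n, and it contains exactly 2^{2^k - 1} monomials. -/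
open MvPolynomial

/-- Replace consecutive pairs `(g₁, g₂, g₃, g₄, …)` of a list by `(op g₁ g₂, op g₃ g₄, …)`. -/
def pairStep {α : Type*} (op : α → α → α) : List α → List α
  | a :: b :: l => op a b :: pairStep op l
  | l => l

/-- The alternating construction: apply `j` steps to the starting list, where
odd-numbered steps sum consecutive pairs and even-numbered steps multiply them
(the first step is a sum step). -/
noncomputable def altRun (start : List (MvPolynomial ℕ ℝ)) :
    ℕ → List (MvPolynomial ℕ ℝ)
  | 0 => start
  | j + 1 => pairStep (if (j + 1) % 2 = 1 then (· + ·) else (· * ·)) (altRun start j)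

/-- The starting list `(x₁x₂, x₃x₄, …, x_{n-1}x_n)` of `n/2 = 2^(2k-1)` products. -/
noncomputable def altInit (k : ℕ) : List (MvPolynomial ℕ ℝ) :=
  (List.range (2 ^ (2 * k - 1))).map (fun i => X (2 * i + 1) * X (2 * i + 2))

/-!
Every polynomial in the list at any stage is a sum, with coefficients one, of distinct
multilinear monomials of a common degree, all in the variables of one contiguous block, and
consecutive entries use consecutive disjoint blocks. Adding two neighbours of positive degree
unites two disjoint sets of monomials, so the count doubles and the degree stays; multiplying
them pairs monomials in disjoint variables, so the product of two monomials remains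
multilinear and determines its factors, and count and degree square resp. double. Starting
from one monomial of degree 2, after the sum and product steps `i` times the count is
`2 ^ (2 ^ (i + 1) - 2)` and the degree `2 ^ (i + 1)`; one last sum step gives the claim.
-/

namespace Finsupp

variable {σ : Type*}

def IsMultilinearMonomial (d : ℕ) (s : Set σ) (m : σ →₀ ℕ) : Prop :=
  (∀ v, m v ≤ 1) ∧ m.degree = d ∧ ↑m.support ⊆ s

namespace IsMultilinearMonomial

variable {d d' : ℕ} {s t : Set σ} {a b : σ →₀ ℕ}

theorem single (v : σ) : IsMultilinearMonomial 1 {v} (single v 1) := by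
  classical
  refine ⟨fun w => ?_, degree_single v 1, by simp⟩
  rw [single_apply]
  split_ifs <;> omega

theorem mono (ha : IsMultilinearMonomial d s a) (hst : s ⊆ t) : IsMultilinearMonomial d t a :=
  ⟨ha.1, ha.2.1, ha.2.2.trans hst⟩

theorem apply_eq_zero (ha : IsMultilinearMonomial d s a) {v : σ} (hv : v ∉ s) : a v = 0 :=
  notMem_support_iff.mp fun h => hv (ha.2.2 h)

theorem add (ha : IsMultilinearMonomial d s a) (hb : IsMultilinearMonomial d' t b)
    (hst : Disjoint s t) : IsMultilinearMonomial (d + d') (s ∪ t) (a + b) := by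
  classical
  refine ⟨fun v => ?_, by rw [map_add, ha.2.1, hb.2.1], ?_⟩
  · by_cases hv : v ∈ s
    · simpa [hb.apply_eq_zero (hst.notMem_of_mem_left hv)] using ha.1 v
    · simpa [ha.apply_eq_zero hv] using hb.1 v
  · refine (Finset.coe_subset.mpr support_add).trans ?_
    push_cast
    exact Set.union_subset_union ha.2.2 hb.2.2

theorem ne_of_disjoint (hd : 0 < d) (ha : IsMultilinearMonomial d s a)
    (hb : IsMultilinearMonomial d t b) (hst : Disjoint s t) : a ≠ b := by
  rintro rfl
  have hne : a ≠ 0 := by rintro rfl; simp [IsMultilinearMonomial] at ha; omega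
  obtain ⟨v, hv⟩ := support_nonempty_iff.mpr hne
  exact hst.notMem_of_mem_left (ha.2.2 hv) (hb.2.2 hv)

end IsMultilinearMonomial

theorem add_eq_add_iff_of_disjoint {s t : Set σ} (hst : Disjoint s t) {a a' b b' : σ →₀ ℕ}
    (ha : ↑a.support ⊆ s) (ha' : ↑a'.support ⊆ s) (hb : ↑b.support ⊆ t) (hb' : ↑b'.support ⊆ t) :
    a + b = a' + b' ↔ a = a' ∧ b = b' := by
  classical
  refine ⟨fun h => ?_, fun h => by rw [h.1, h.2]⟩
  have hfilter : ∀ a b : σ →₀ ℕ, ↑a.support ⊆ s → ↑b.support ⊆ t → (a + b).filter (· ∈ s) = a :=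
    fun a b ha hb => by
      rw [filter_add, (filter_eq_self_iff _ a).mpr fun v hv => ha (mem_support_iff.mpr hv),
        (filter_eq_zero_iff _ b).mpr fun v hv => notMem_support_iff.mp
          fun hb' => hst.notMem_of_mem_left hv (hb hb'), add_zero]
  have haa : a = a' := by rw [← hfilter a b ha hb, h, hfilter a' b' ha' hb']
  exact ⟨haa, add_left_cancel (haa ▸ h)⟩

end Finsupp

namespace MvPolynomial

variable {σ R : Type*} [CommSemiring R]

open Finsupp (IsMultilinearMonomial)

def IsMultilinearSum (d N : ℕ) (s : Set σ) (p : MvPolynomial σ R) : Prop :=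
  ∃ S : Finset (σ →₀ ℕ), S.card = N ∧ (∀ m ∈ S, IsMultilinearMonomial d s m) ∧
    p = ∑ m ∈ S, monomial m 1

theorem isMultilinearSum_X (v : σ) : IsMultilinearSum 1 1 {v} (X v : MvPolynomial σ R) :=
  ⟨{Finsupp.single v 1}, rfl, by simpa using Finsupp.IsMultilinearMonomial.single v, by simp [X]⟩

theorem coeff_sum_monomial_one [DecidableEq σ] (S : Finset (σ →₀ ℕ)) (m : σ →₀ ℕ) :
    coeff m (∑ m' ∈ S, monomial m' (1 : R)) = if m ∈ S then 1 else 0 := by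
  simp [coeff_sum, coeff_monomial]

namespace IsMultilinearSum

variable {d d' N N' : ℕ} {s t : Set σ} {p q : MvPolynomial σ R}

theorem mono (hp : IsMultilinearSum d N s p) (hst : s ⊆ t) : IsMultilinearSum d N t p :=
  let ⟨S, hcard, hS, hp⟩ := hp
  ⟨S, hcard, fun m hm => (hS m hm).mono hst, hp⟩

theorem add (hd : 0 < d) (hp : IsMultilinearSum d N s p) (hq : IsMultilinearSum d N' t q)
    (hst : Disjoint s t) : IsMultilinearSum d (N + N') (s ∪ t) (p + q) := by
  classical
  obtain ⟨S, rfl, hS, rfl⟩ := hp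
  obtain ⟨T, rfl, hT, rfl⟩ := hq
  have hdisj : Disjoint S T := Finset.disjoint_left.mpr fun m hmS hmT =>
    (hS m hmS).ne_of_disjoint hd (hT m hmT) hst rfl
  refine ⟨S ∪ T, Finset.card_union_of_disjoint hdisj, fun m hm => ?_,
    (Finset.sum_union hdisj).symm⟩
  rcases Finset.mem_union.mp hm with hm | hm
  · exact (hS m hm).mono Set.subset_union_left
  · exact (hT m hm).mono Set.subset_union_right

theorem mul (hp : IsMultilinearSum d N s p) (hq : IsMultilinearSum d' N' t q)
    (hst : Disjoint s t) : IsMultilinearSum (d + d') (N * N') (s ∪ t) (p * q) := by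
  classical
  obtain ⟨S, rfl, hS, rfl⟩ := hp
  obtain ⟨T, rfl, hT, rfl⟩ := hq
  have hinj : Set.InjOn (fun x : (σ →₀ ℕ) × (σ →₀ ℕ) => x.1 + x.2) ↑(S ×ˢ T) := by
    rintro ⟨a, b⟩ hab ⟨a', b'⟩ hab' h
    simp only [Finset.coe_product, Set.mem_prod, Finset.mem_coe] at hab hab'
    exact Prod.ext_iff.mpr <| (Finsupp.add_eq_add_iff_of_disjoint hst (hS a hab.1).2.2
      (hS a' hab'.1).2.2 (hT b hab.2).2.2 (hT b' hab'.2).2.2).mp h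
  refine ⟨(S ×ˢ T).image (fun x => x.1 + x.2), ?_, ?_, ?_⟩
  · rw [Finset.card_image_of_injOn hinj, Finset.card_product]
  · simp only [Finset.mem_image, Finset.mem_product, Prod.exists]
    rintro _ ⟨a, b, ⟨ha, hb⟩, rfl⟩
    exact (hS a ha).add (hT b hb) hst
  · rw [Finset.sum_image hinj, Finset.sum_mul_sum, Finset.sum_product]
    simp only [monomial_mul, one_mul]

theorem isHomogeneous (hp : IsMultilinearSum d N s p) : p.IsHomogeneous d := by
  obtain ⟨S, -, hS, rfl⟩ := hp
  exact IsHomogeneous.sum _ _ _ fun m hm => isHomogeneous_monomial _ (hS m hm).2.1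

theorem of_mem_support (hp : IsMultilinearSum d N s p) {m : σ →₀ ℕ} (hm : m ∈ p.support) :
    IsMultilinearMonomial d s m := by
  classical
  obtain ⟨S, -, hS, rfl⟩ := hp
  rw [mem_support_iff, coeff_sum_monomial_one] at hm
  exact hS m (of_not_not fun h => hm (if_neg h))

theorem card_support [Nontrivial R] (hp : IsMultilinearSum d N s p) : p.support.card = N := by
  classical
  obtain ⟨S, rfl, -, rfl⟩ := hp
  congr 1
  ext m
  simp [coeff_sum_monomial_one]

end IsMultilinearSum

end MvPolynomial

theorem length_pairStep {α : Type*} (op : α → α → α) (l : List α) :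
    (pairStep op l).length = (l.length + 1) / 2 := by
  induction l using pairStep.induct with
  | case1 a b l ih => simp only [pairStep, List.length_cons, ih]; omega
  | case2 l hl =>
    match l, hl with
    | [], _ | [_], _ => simp [pairStep]
    | a :: b :: l, hl => exact (hl a b l rfl).elim

/-- The `i`-th entry of the list satisfies `Q` on the block `(lo + i * c, lo + (i + 1) * c]`. -/
def Blockwise {α : Type*} (Q : Set ℕ → α → Prop) (c : ℕ) : ℕ → List α → Prop
  | _, [] => True
  | lo, a :: l => Q (Set.Ioc lo (lo + c)) a ∧ Blockwise Q c (lo + c) l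

theorem Blockwise.pairStep {α : Type*} {Q Q' : Set ℕ → α → Prop} {op : α → α → α} {c : ℕ}
    (hop : ∀ s t a b, Disjoint s t → Q s a → Q t b → Q' (s ∪ t) (op a b))
    {l : List α} (hl : Even l.length) {lo : ℕ} (h : Blockwise Q c lo l) :
    Blockwise Q' (2 * c) lo (pairStep op l) := by
  induction l using pairStep.induct generalizing lo with
  | case1 a b l ih =>
    obtain ⟨ha, hb, h⟩ := h
    have hunion :
        Set.Ioc lo (lo + c) ∪ Set.Ioc (lo + c) (lo + c + c) = Set.Ioc lo (lo + 2 * c) := by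
      rw [Set.Ioc_union_Ioc_eq_Ioc (by omega) (by omega)]; ring_nf
    refine ⟨hunion ▸ hop _ _ a b (Set.Ioc_disjoint_Ioc.mpr (by omega)) ha hb, ?_⟩
    rw [show lo + 2 * c = lo + c + c by ring]
    exact ih (by simpa [Nat.even_add_one] using hl) h
  | case2 l hl' =>
    match l, hl' with
    | [], _ => trivial
    | [_], _ => simp at hl
    | a :: b :: l, hl' => exact (hl' a b l rfl).elim

theorem altRun_two_mul_add_one (start : List (MvPolynomial ℕ ℝ)) (i : ℕ) :
    altRun start (2 * i + 1) = pairStep (· + ·) (altRun start (2 * i)) := by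
  simp [altRun]

theorem altRun_two_mul_add_two (start : List (MvPolynomial ℕ ℝ)) (i : ℕ) :
    altRun start (2 * i + 2) = pairStep (· * ·) (altRun start (2 * i + 1)) := by
  simp [altRun, Nat.add_mod]

theorem length_altRun {start : List (MvPolynomial ℕ ℝ)} {m : ℕ} (h : start.length = 2 ^ m)
    {j : ℕ} (hj : j ≤ m) : (altRun start j).length = 2 ^ (m - j) := by
  induction j with
  | zero => exact h
  | succ j ih =>
    rw [altRun, length_pairStep, ih (by omega), show m - j = m - (j + 1) + 1 by omega, pow_succ]
    omega

theorem even_length_altRun {start : List (MvPolynomial ℕ ℝ)} {m : ℕ} (h : start.length = 2 ^ m)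
    {j : ℕ} (hj : j < m) : Even (altRun start j).length := by
  rw [length_altRun h hj.le]
  exact Nat.even_pow.mpr ⟨even_two, by omega⟩

theorem blockwise_altInit (k : ℕ) : Blockwise (IsMultilinearSum 2 1) 2 0 (altInit k) := by
  suffices ∀ n a, Blockwise (IsMultilinearSum 2 1) 2 (2 * a)
      ((List.range' a n).map fun i => (X (2 * i + 1) * X (2 * i + 2) : MvPolynomial ℕ ℝ)) by
    simpa [altInit, List.range_eq_range'] using this (2 ^ (2 * k - 1)) 0
  intro n
  induction n with
  | zero => intro a; trivial
  | succ n ih =>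
    intro a
    refine ⟨?_, by simpa [mul_add, add_assoc] using ih (a + 1)⟩
    refine ((isMultilinearSum_X _).mul (isMultilinearSum_X _) ?_).mono ?_
    · simp
    · intro v
      simp only [Set.union_singleton, Set.mem_insert_iff, Set.mem_singleton_iff, Set.mem_Ioc]
      omega

theorem length_altInit (k : ℕ) : (altInit k).length = 2 ^ (2 * k - 1) := by
  simp [altInit]

theorem blockwise_altRun_altInit_two_mul_add_one {k i : ℕ} (hi : i < k)
    (h : Blockwise (IsMultilinearSum (2 ^ (i + 1)) (2 ^ (2 ^ (i + 1) - 2))) (2 ^ (2 * i + 1)) 0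
      (altRun (altInit k) (2 * i))) :
    Blockwise (IsMultilinearSum (2 ^ (i + 1)) (2 ^ (2 ^ (i + 1) - 1))) (2 ^ (2 * i + 2)) 0
      (altRun (altInit k) (2 * i + 1)) := by
  have hstep := h.pairStep (fun _ _ _ _ hst hp hq => hp.add (by positivity) hq hst)
    (even_length_altRun (length_altInit k) (by omega))
  have hcount : 2 ^ (2 ^ (i + 1) - 2) + 2 ^ (2 ^ (i + 1) - 2) = 2 ^ (2 ^ (i + 1) - 1) := by
    have : 2 ≤ 2 ^ (i + 1) := Nat.le_self_pow (by omega) 2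
    rw [← two_mul, ← pow_succ']
    congr 1
    omega
  rwa [hcount, ← pow_succ', ← altRun_two_mul_add_one] at hstep

theorem blockwise_altRun_altInit_two_mul {k i : ℕ} (hi : i < k) :
    Blockwise (IsMultilinearSum (2 ^ (i + 1)) (2 ^ (2 ^ (i + 1) - 2))) (2 ^ (2 * i + 1)) 0
      (altRun (altInit k) (2 * i)) := by
  induction i with
  | zero => exact blockwise_altInit k
  | succ i ih =>
    have hstep := (blockwise_altRun_altInit_two_mul_add_one (by omega) (ih (by omega))).pairStep
      (fun _ _ _ _ hst hp hq => hp.mul hq hst) (even_length_altRun (length_altInit k) (by omega))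
    have hcount : 2 ^ (2 ^ (i + 1) - 1) * 2 ^ (2 ^ (i + 1) - 1) = 2 ^ (2 ^ (i + 1 + 1) - 2) := by
      have : 2 ≤ 2 ^ (i + 1) := Nat.le_self_pow (by omega) 2
      rw [← pow_add, pow_succ _ (i + 1)]
      congr 1
      omega
    rwa [← altRun_two_mul_add_two, ← two_mul, ← pow_succ', hcount, ← pow_succ'] at hstep

/-- After the `2k - 1` alternating sum/product steps starting from
`(x₁x₂, …, x_{n-1}x_n)` with `n = 2^(2k)`, a single polynomial `P` remains; `P` is a
homogeneous multilinear polynomial of total degree `2^k` in the variables `x₁, …, x_n`,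
with exactly `2^(2^k - 1)` monomials. -/
theorem stmt13 (k : ℕ) (hk : 1 ≤ k) (P : MvPolynomial ℕ ℝ)
    (hP : altRun (altInit k) (2 * k - 1) = [P]) :
    P.IsHomogeneous (2 ^ k) ∧
      (∀ m ∈ P.support, ∀ i : ℕ, m i ≤ 1) ∧
      (∀ i ∈ P.vars, 1 ≤ i ∧ i ≤ 2 ^ (2 * k)) ∧
      P.support.card = 2 ^ (2 ^ k - 1) := by
  obtain ⟨i, rfl⟩ : ∃ i, k = i + 1 := ⟨k - 1, by omega⟩
  have hlast := blockwise_altRun_altInit_two_mul_add_one (Nat.lt_succ_self i)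
    (blockwise_altRun_altInit_two_mul (Nat.lt_succ_self i))
  rw [show 2 * i + 1 = 2 * (i + 1) - 1 by omega, hP] at hlast
  have hP' : IsMultilinearSum (2 ^ (i + 1)) (2 ^ (2 ^ (i + 1) - 1))
      (Set.Ioc 0 (2 ^ (2 * (i + 1)))) P := by
    simpa [Blockwise, mul_add] using hlast.1
  refine ⟨hP'.isHomogeneous, fun m hm => (hP'.of_mem_support hm).1, fun v hv => ?_,
    hP'.card_support⟩
  obtain ⟨m, hm, hv⟩ := (mem_vars_iff_mem_support v).mp hv
  exact (hP'.of_mem_support hm).2.2 hv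
end
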